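/- arXiv:1703.09690 — 2 statements merged into one kernel-verified Lean document; each statement's English description precedes it below -/
import Mathlib

section
/- The gradient of the smooth objective f(B) = ½‖X − D * B‖_F² with respect to B ∈ ℝ^{r×n×k} is ∇f(B) = D^† * D * B − D^† * X, where D^† is the tensor transpose and * is the t-product. -/
open scoped BigOperators

/-- Circular convolution of length-`k` tubes. -/
def cconv {k : ℕ} [NeZero k] (a b : ZMod k → ℝ) : ZMod k → ℝ :=
  fun ℓ => ∑ s : ZMod k, a s * b (ℓ - s)

/-- The t-product of third-order tensors. -/
def tProd {k m r n : ℕ} [NeZero k] (D : Fin m → Fin r → ZMod k → ℝ)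
    (B : Fin r → Fin n → ZMod k → ℝ) : Fin m → Fin n → ZMod k → ℝ :=
  fun i j => ∑ q : Fin r, cconv (D i q) (B q j)

/-- Tensor transpose: transpose each frontal slice and reverse the order of slices 2..k. -/
def ttr {k m n : ℕ} [NeZero k] (X : Fin m → Fin n → ZMod k → ℝ) :
    Fin n → Fin m → ZMod k → ℝ :=
  fun j i ℓ => X i j (-ℓ)

/-- Squared Frobenius norm of a third-order tensor. -/
def frobSq {k m n : ℕ} [NeZero k] (Y : Fin m → Fin n → ZMod k → ℝ) : ℝ :=
  ∑ i : Fin m, ∑ j : Fin n, ∑ ℓ : ZMod k, (Y i j ℓ) ^ 2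

/-!
The objective is `½ frobSq` composed with the affine map `B ↦ X - D * B`, so the chain rule gives
`f'(B) H = ⟨D * B - X, D * H⟩`. The t-product has the adjoint identity `⟨A, D * H⟩ = ⟨D† * A, H⟩`,
which on tubes is the substitution `s ↦ ℓ - s` in the circular convolution; moving `D` across the
inner product turns the derivative into `⟨D† * D * B - D† * X, H⟩`.
-/

section

variable {k m r n : ℕ}

def entryCLM (i : Fin m) (j : Fin n) (ℓ : ZMod k) : (Fin m → Fin n → ZMod k → ℝ) →L[ℝ] ℝ :=
  ContinuousLinearMap.proj (R := ℝ) (φ := fun _ : ZMod k => ℝ) ℓ ∘L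
    ContinuousLinearMap.proj (φ := fun _ : Fin n => ZMod k → ℝ) j ∘L
    ContinuousLinearMap.proj (φ := fun _ : Fin m => Fin n → ZMod k → ℝ) i

@[simp]
theorem entryCLM_apply (i : Fin m) (j : Fin n) (ℓ : ZMod k) (Y : Fin m → Fin n → ZMod k → ℝ) :
    entryCLM i j ℓ Y = Y i j ℓ :=
  rfl

variable [NeZero k]

def frobInner (Y Z : Fin m → Fin n → ZMod k → ℝ) : ℝ :=
  ∑ i, ∑ j, ∑ ℓ, Y i j ℓ * Z i j ℓ

theorem sum_mul_cconv (a d h : ZMod k → ℝ) :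
    ∑ ℓ, a ℓ * cconv d h ℓ = ∑ ℓ, cconv (fun s => d (-s)) a ℓ * h ℓ := by
  simp only [cconv, Finset.mul_sum, Finset.sum_mul]
  have lhs : ∀ ℓ, ∑ s, a ℓ * (d s * h (ℓ - s)) = ∑ t, a ℓ * (d (ℓ - t) * h t) := fun ℓ =>
    Fintype.sum_equiv (Equiv.subLeft ℓ) _ _ fun s => by simp
  have rhs : ∀ ℓ, ∑ s, d (-s) * a (ℓ - s) * h ℓ = ∑ t, d (t - ℓ) * a t * h ℓ := fun ℓ =>
    Fintype.sum_equiv (Equiv.subLeft ℓ) _ _ fun s => by simp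
  simp only [lhs, rhs]
  rw [Finset.sum_comm]
  exact Fintype.sum_congr _ _ fun t => Fintype.sum_congr _ _ fun ℓ => by ring

theorem frobInner_tProd_right (D : Fin m → Fin r → ZMod k → ℝ) (A : Fin m → Fin n → ZMod k → ℝ)
    (H : Fin r → Fin n → ZMod k → ℝ) :
    frobInner A (tProd D H) = frobInner (tProd (ttr D) A) H := by
  calc frobInner A (tProd D H)
      = ∑ i, ∑ j, ∑ q, ∑ ℓ, A i j ℓ * cconv (D i q) (H q j) ℓ := by
        simp only [frobInner, tProd, Finset.sum_apply, Finset.mul_sum]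
        exact Fintype.sum_congr _ _ fun i => Fintype.sum_congr _ _ fun j => Finset.sum_comm
    _ = ∑ i, ∑ j, ∑ q, ∑ ℓ, cconv (ttr D q i) (A i j) ℓ * H q j ℓ := by
        simp only [sum_mul_cconv]; rfl
    _ = frobInner (tProd (ttr D) A) H := by
        simp only [frobInner, tProd, Finset.sum_apply, Finset.sum_mul]
        rw [Finset.sum_comm]
        conv_rhs => rw [Finset.sum_comm]
        refine Fintype.sum_congr _ _ fun j => ?_
        rw [Finset.sum_comm]
        exact Fintype.sum_congr _ _ fun q => Finset.sum_comm

theorem tProd_add (D : Fin m → Fin r → ZMod k → ℝ) (B B' : Fin r → Fin n → ZMod k → ℝ) :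
    tProd D (B + B') = tProd D B + tProd D B' := by
  funext i j ℓ
  simp only [tProd, cconv, Pi.add_apply, Finset.sum_apply, mul_add, Finset.sum_add_distrib]

theorem tProd_smul (D : Fin m → Fin r → ZMod k → ℝ) (c : ℝ) (B : Fin r → Fin n → ZMod k → ℝ) :
    tProd D (c • B) = c • tProd D B := by
  funext i j ℓ
  simp only [tProd, cconv, Pi.smul_apply, smul_eq_mul, Finset.sum_apply, Finset.mul_sum,
    mul_left_comm]

noncomputable def tProdCLM (D : Fin m → Fin r → ZMod k → ℝ) :
    (Fin r → Fin n → ZMod k → ℝ) →L[ℝ] (Fin m → Fin n → ZMod k → ℝ) :=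
  LinearMap.toContinuousLinearMap
    { toFun := tProd D
      map_add' := tProd_add D
      map_smul' := tProd_smul D }

@[simp]
theorem tProdCLM_apply (D : Fin m → Fin r → ZMod k → ℝ) (B : Fin r → Fin n → ZMod k → ℝ) :
    tProdCLM D B = tProd D B :=
  rfl

noncomputable def frobInnerCLM (Y : Fin m → Fin n → ZMod k → ℝ) :
    (Fin m → Fin n → ZMod k → ℝ) →L[ℝ] ℝ :=
  ∑ i, ∑ j, ∑ ℓ, Y i j ℓ • entryCLM i j ℓ

@[simp]
theorem frobInnerCLM_apply (Y Z : Fin m → Fin n → ZMod k → ℝ) :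
    frobInnerCLM Y Z = frobInner Y Z := by
  simp [frobInnerCLM, frobInner]

theorem hasFDerivAt_frobSq (Y : Fin m → Fin n → ZMod k → ℝ) :
    HasFDerivAt frobSq ((2 : ℝ) • frobInnerCLM Y) Y := by
  have h : HasFDerivAt frobSq (∑ i, ∑ j, ∑ ℓ, (2 * Y i j ℓ) • entryCLM i j ℓ) Y := by
    refine HasFDerivAt.fun_sum fun i _ => HasFDerivAt.fun_sum fun j _ =>
      HasFDerivAt.fun_sum fun ℓ _ => ?_
    simpa using (entryCLM i j ℓ).hasFDerivAt.pow 2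
  convert h using 1
  simp only [frobInnerCLM, Finset.smul_sum, smul_smul]

theorem hasFDerivAt_half_frobSq_sub_tProd (X : Fin m → Fin n → ZMod k → ℝ)
    (D : Fin m → Fin r → ZMod k → ℝ) (B : Fin r → Fin n → ZMod k → ℝ) :
    HasFDerivAt (fun B' => (1 / 2) * frobSq (X - tProd D B'))
      (frobInnerCLM (tProd (ttr D) (tProd D B) - tProd (ttr D) X)) B := by
  have h := ((hasFDerivAt_frobSq (X - tProd D B)).comp B
    ((tProdCLM D).hasFDerivAt.const_sub X)).const_mul (1 / 2)
  refine h.congr_fderiv (ContinuousLinearMap.ext fun H => ?_)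
  calc _ = frobInner (tProd D B - X) (tProd D H) := by
        simp [frobInner, ← Finset.sum_neg_distrib, ← neg_mul]
    _ = frobInner (tProd (ttr D) (tProd D B - X)) H := frobInner_tProd_right D _ H
    _ = _ := by rw [frobInnerCLM_apply, ← tProdCLM_apply, map_sub]; rfl

end

/-- The gradient of `f(B) = ½‖X − D*B‖_F²` is `D† * D * B − D† * X`. -/
theorem gradient_of_reconstruction {k m r n : ℕ} [NeZero k]
    (X : Fin m → Fin n → ZMod k → ℝ) (D : Fin m → Fin r → ZMod k → ℝ) :
    ∀ B : Fin r → Fin n → ZMod k → ℝ,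
      DifferentiableAt ℝ
        (fun B' : Fin r → Fin n → ZMod k → ℝ => (1 / 2) * frobSq (X - tProd D B')) B ∧
      ∀ H : Fin r → Fin n → ZMod k → ℝ,
        fderiv ℝ
          (fun B' : Fin r → Fin n → ZMod k → ℝ => (1 / 2) * frobSq (X - tProd D B')) B H =
          ∑ q : Fin r, ∑ j : Fin n, ∑ ℓ : ZMod k,
            (tProd (ttr D) (tProd D B) - tProd (ttr D) X) q j ℓ * H q j ℓ := by
  intro B
  have h := hasFDerivAt_half_frobSq_sub_tProd X D B
  exact ⟨h.differentiableAt, fun H => by rw [h.fderiv, frobInnerCLM_apply, frobInner]⟩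
end

section
/- The gradient of f(B) = ½‖X − D*B‖_F² is Lipschitz continuous with constant L = Σ_{ℓ=1}^k ‖(D̂^{(ℓ)})^H D̂^{(ℓ)}‖_F: for all B, C ∈ ℝ^{r×n×k}, ‖∇f(B) − ∇f(C)‖_F ≤ L ‖B − C‖_F. -/
open scoped BigOperators

/-- Unnormalized discrete Fourier transform of a length-`k` tube. -/
noncomputable def dft {k : ℕ} [NeZero k] (x : ZMod k → ℝ) : ZMod k → ℂ :=
  fun ℓ => ∑ s : ZMod k, (x s : ℂ) *
    Complex.exp (-2 * Real.pi * Complex.I * (ℓ.val : ℂ) * (s.val : ℂ) / (k : ℂ))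

/-- Frobenius norm of a third-order tensor. -/
noncomputable def frobNorm {k m n : ℕ} [NeZero k] (Y : Fin m → Fin n → ZMod k → ℝ) : ℝ :=
  Real.sqrt (frobSq Y)

/-! The two gradients differ by `G * (B - C)` with `G = Dᵀ * D`. Cauchy–Schwarz on the circular
convolution gives `‖G * E‖² ≤ k ‖G‖² ‖E‖²`. By Parseval and the convolution theorem,
`k ‖G‖² = Σ_ℓ ‖Ĝ⁽ˡ⁾‖_F²` with `Ĝ⁽ˡ⁾ = (D̂⁽ˡ⁾)ᴴ D̂⁽ˡ⁾`, and `Σ_ℓ a_ℓ² ≤ (Σ_ℓ a_ℓ)²` for `a_ℓ ≥ 0`. -/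

open ComplexConjugate
open scoped ZMod

namespace ZMod

variable {N : ℕ} [NeZero N]

lemma dft_conv (Φ Ψ : ZMod N → ℂ) (ℓ : ZMod N) :
    𝓕 (fun t => ∑ s, Φ s * Ψ (t - s)) ℓ = 𝓕 Φ ℓ * 𝓕 Ψ ℓ := by
  simp only [dft_apply, smul_eq_mul]
  rw [Finset.sum_mul_sum]
  simp only [Finset.mul_sum]
  rw [Finset.sum_comm]
  refine Finset.sum_congr rfl fun s _ => ?_
  rw [← Equiv.sum_comp (Equiv.addLeft s)]
  refine Finset.sum_congr rfl fun p _ => ?_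
  simp only [Equiv.coe_addLeft, add_sub_cancel_left]
  rw [show -((s + p) * ℓ) = -(s * ℓ) + -(p * ℓ) by ring, AddChar.map_add_eq_mul]
  ring

lemma dft_conj_comp_neg (Φ : ZMod N → ℂ) (ℓ : ZMod N) :
    𝓕 (fun t => conj (Φ (-t))) ℓ = conj (𝓕 Φ ℓ) := by
  simp only [dft_apply, smul_eq_mul, map_sum, map_mul]
  rw [← Equiv.sum_comp (Equiv.neg (ZMod N))]
  refine Finset.sum_congr rfl fun s _ => ?_
  simp [← AddChar.map_neg_eq_conj]

lemma sum_dft (Φ : ZMod N → ℂ) : ∑ ℓ, 𝓕 Φ ℓ = N * Φ 0 := by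
  rw [← dft_apply_zero, dft_dft]
  simp

/-- Parseval: apply `sum_dft` to the autocorrelation `Φ ⋆ conj (Φ ∘ neg)`, whose transform
is `‖𝓕 Φ‖ ^ 2`. -/
lemma sum_sq_norm_dft (Φ : ZMod N → ℂ) : ∑ ℓ, ‖𝓕 Φ ℓ‖ ^ 2 = N * ∑ s, ‖Φ s‖ ^ 2 := by
  have key := sum_dft (fun t => ∑ s, Φ s * conj (Φ (-(t - s))))
  simp only [dft_conv Φ (fun u => conj (Φ (-u))), dft_conj_comp_neg, Complex.mul_conj,
    zero_sub, neg_neg, Complex.normSq_eq_norm_sq] at key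
  exact_mod_cast key

end ZMod

section Tensor

variable {k : ℕ} [NeZero k]

lemma dft_eq_dft_ofReal (x : ZMod k → ℝ) : dft x = 𝓕 (fun s => (x s : ℂ)) := by
  funext ℓ
  refine Finset.sum_congr rfl fun s _ => ?_
  have hindex : ((-(s.val * ℓ.val : ℕ) : ℤ) : ZMod k) = -(s * ℓ) := by
    push_cast
    simp only [ZMod.natCast_val, ZMod.cast_id', id]
  rw [smul_eq_mul, mul_comm, ← hindex, ZMod.stdAddChar_coe]
  congr 2
  push_cast
  ring

lemma dft_sum {ι : Type*} (s : Finset ι) (f : ι → ZMod k → ℝ) (ℓ : ZMod k) :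
    dft (∑ i ∈ s, f i) ℓ = ∑ i ∈ s, dft (f i) ℓ := by
  simp only [dft, Finset.sum_apply, Complex.ofReal_sum, Finset.sum_mul]
  exact Finset.sum_comm

lemma dft_cconv (u v : ZMod k → ℝ) (ℓ : ZMod k) : dft (cconv u v) ℓ = dft u ℓ * dft v ℓ := by
  simp only [dft_eq_dft_ofReal, ← ZMod.dft_conv]
  exact congrArg (fun Φ => 𝓕 Φ ℓ) (by ext t; simp [cconv])

lemma dft_comp_neg (u : ZMod k → ℝ) (ℓ : ZMod k) :
    dft (fun t => u (-t)) ℓ = conj (dft u ℓ) := by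
  simpa [dft_eq_dft_ofReal] using ZMod.dft_conj_comp_neg (fun s => (u s : ℂ)) ℓ

lemma sum_sq_norm_dft (g : ZMod k → ℝ) : ∑ ℓ, ‖dft g ℓ‖ ^ 2 = k * ∑ s, g s ^ 2 := by
  simpa [dft_eq_dft_ofReal] using ZMod.sum_sq_norm_dft (fun s => (g s : ℂ))

lemma cconv_assoc (a b c : ZMod k → ℝ) : cconv (cconv a b) c = cconv a (cconv b c) := by
  funext ℓ
  simp only [cconv, Finset.sum_mul, Finset.mul_sum]
  rw [Finset.sum_comm]
  refine Finset.sum_congr rfl fun s _ => ?_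
  rw [← Equiv.sum_comp (Equiv.addLeft s)]
  refine Finset.sum_congr rfl fun t _ => ?_
  simp only [Equiv.coe_addLeft, add_sub_cancel_left, sub_add_eq_sub_sub]
  ring

lemma cconv_sum_left {ι : Type*} (s : Finset ι) (f : ι → ZMod k → ℝ) (g : ZMod k → ℝ) :
    cconv (∑ i ∈ s, f i) g = ∑ i ∈ s, cconv (f i) g := by
  funext ℓ
  simp only [cconv, Finset.sum_apply, Finset.sum_mul]
  exact Finset.sum_comm

lemma cconv_sum_right {ι : Type*} (s : Finset ι) (f : ZMod k → ℝ) (g : ι → ZMod k → ℝ) :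
    cconv f (∑ i ∈ s, g i) = ∑ i ∈ s, cconv f (g i) := by
  funext ℓ
  simp only [cconv, Finset.sum_apply, Finset.mul_sum]
  exact Finset.sum_comm

lemma tProd_sub {m r n : ℕ} (D : Fin m → Fin r → ZMod k → ℝ)
    (B C : Fin r → Fin n → ZMod k → ℝ) :
    tProd D (B - C) = tProd D B - tProd D C := by
  funext i j ℓ
  simp only [Pi.sub_apply, tProd, cconv, Finset.sum_apply, ← Finset.sum_sub_distrib, mul_sub]

lemma tProd_assoc {m r r' n : ℕ} (A : Fin m → Fin r → ZMod k → ℝ)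
    (B : Fin r → Fin r' → ZMod k → ℝ) (C : Fin r' → Fin n → ZMod k → ℝ) :
    tProd (tProd A B) C = tProd A (tProd B C) := by
  funext i j
  simp only [tProd, cconv_sum_left, cconv_sum_right, cconv_assoc]
  exact Finset.sum_comm

lemma dft_tProd_ttr_self {m r : ℕ} (D : Fin m → Fin r → ZMod k → ℝ) (a b : Fin r)
    (ℓ : ZMod k) :
    dft (tProd (ttr D) D a b) ℓ = ∑ i, conj (dft (D i a) ℓ) * dft (D i b) ℓ := by
  rw [tProd, dft_sum]
  refine Finset.sum_congr rfl fun i _ => ?_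
  rw [dft_cconv]
  exact congrArg (· * _) (dft_comp_neg _ ℓ)

lemma natCast_mul_frobSq_eq_sum_dft {r r' : ℕ} (G : Fin r → Fin r' → ZMod k → ℝ) :
    k * frobSq G = ∑ ℓ, ∑ a, ∑ b, ‖dft (G a b) ℓ‖ ^ 2 := by
  calc (k : ℝ) * frobSq G = ∑ a, ∑ b, ∑ ℓ, ‖dft (G a b) ℓ‖ ^ 2 := by
        simp only [sum_sq_norm_dft, frobSq, Finset.mul_sum]
    _ = ∑ ℓ, ∑ a, ∑ b, ‖dft (G a b) ℓ‖ ^ 2 :=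
        (Finset.sum_congr rfl fun a _ => Finset.sum_comm).trans Finset.sum_comm

lemma sq_tProd_apply_le {r r' n : ℕ} (G : Fin r → Fin r' → ZMod k → ℝ)
    (E : Fin r' → Fin n → ZMod k → ℝ) (a : Fin r) (j : Fin n) (ℓ : ZMod k) :
    tProd G E a j ℓ ^ 2 ≤ (∑ b, ∑ s, G a b s ^ 2) * ∑ b, ∑ t, E b j t ^ 2 := by
  have hshift : ∀ b, ∑ s, E b j (ℓ - s) ^ 2 = ∑ t, E b j t ^ 2 := fun b =>
    Equiv.sum_comp (Equiv.subLeft ℓ) (fun t => E b j t ^ 2)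
  have hprod : tProd G E a j ℓ = ∑ p : Fin r' × ZMod k, G a p.1 p.2 * E p.1 j (ℓ - p.2) := by
    simp [tProd, cconv, Finset.sum_apply, Fintype.sum_prod_type]
  simp only [← hshift, ← Fintype.sum_prod_type', hprod]
  exact Finset.sum_mul_sq_le_sq_mul_sq _ _ _

lemma frobSq_nonneg {m n : ℕ} (Y : Fin m → Fin n → ZMod k → ℝ) : 0 ≤ frobSq Y := by
  unfold frobSq
  positivity

lemma frobSq_tProd_le {r r' n : ℕ} (G : Fin r → Fin r' → ZMod k → ℝ)
    (E : Fin r' → Fin n → ZMod k → ℝ) :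
    frobSq (tProd G E) ≤ k * frobSq G * frobSq E := by
  calc frobSq (tProd G E)
      ≤ ∑ a, ∑ j, ∑ _ℓ : ZMod k, (∑ b, ∑ s, G a b s ^ 2) * ∑ b, ∑ t, E b j t ^ 2 := by
        unfold frobSq
        gcongr with a _ j _ ℓ _
        exact sq_tProd_apply_le G E a j ℓ
    _ = k * frobSq G * frobSq E := by
        simp only [Finset.sum_const, Finset.card_univ, ZMod.card, nsmul_eq_mul]
        rw [frobSq, frobSq, Finset.sum_comm (γ := Fin r'), mul_assoc, Finset.sum_mul_sum,
          Finset.mul_sum]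
        simp only [Finset.mul_sum]

lemma frobNorm_tProd_le {r r' n : ℕ} (G : Fin r → Fin r' → ZMod k → ℝ)
    (E : Fin r' → Fin n → ZMod k → ℝ) :
    frobNorm (tProd G E) ≤ √(k * frobSq G) * frobNorm E := by
  rw [frobNorm, frobNorm, ← Real.sqrt_mul (mul_nonneg k.cast_nonneg (frobSq_nonneg G))]
  exact Real.sqrt_le_sqrt (frobSq_tProd_le G E)

end Tensor

/-- `∇f` is Lipschitz with constant `L = Σ_ℓ ‖(D̂^{(ℓ)})^H D̂^{(ℓ)}‖_F`. -/
theorem gradient_lipschitz {k m r n : ℕ} [NeZero k]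
    (X : Fin m → Fin n → ZMod k → ℝ) (D : Fin m → Fin r → ZMod k → ℝ)
    (gradf : (Fin r → Fin n → ZMod k → ℝ) → (Fin r → Fin n → ZMod k → ℝ))
    (hgrad : ∀ B, gradf B = tProd (ttr D) (tProd D B) - tProd (ttr D) X)
    (L : ℝ)
    (hL : L = ∑ ℓ : ZMod k, Real.sqrt (∑ a : Fin r, ∑ b : Fin r,
        ‖∑ i : Fin m, (starRingEnd ℂ) (dft (D i a) ℓ) * dft (D i b) ℓ‖ ^ 2)) :
    ∀ B C : Fin r → Fin n → ZMod k → ℝ,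
      frobNorm (gradf B - gradf C) ≤ L * frobNorm (B - C) := by
  intro B C
  set G := tProd (ttr D) D
  have hdiff : gradf B - gradf C = tProd G (B - C) := by
    rw [hgrad, hgrad, sub_sub_sub_cancel_right, tProd_assoc, tProd_sub, tProd_sub]
  have hL0 : 0 ≤ L := hL ▸ Finset.sum_nonneg fun ℓ _ => Real.sqrt_nonneg _
  have hG : k * frobSq G ≤ L ^ 2 := by
    rw [natCast_mul_frobSq_eq_sum_dft, hL]
    refine le_of_eq_of_le ?_ (Finset.sum_sq_le_sq_sum_of_nonneg fun ℓ _ => Real.sqrt_nonneg _)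
    refine Finset.sum_congr rfl fun ℓ _ => ?_
    simp only [G, dft_tProd_ttr_self]
    rw [Real.sq_sqrt (by positivity)]
  calc frobNorm (gradf B - gradf C) ≤ √(k * frobSq G) * frobNorm (B - C) :=
        hdiff ▸ frobNorm_tProd_le G (B - C)
    _ ≤ L * frobNorm (B - C) :=
        mul_le_mul_of_nonneg_right (Real.sqrt_le_iff.mpr ⟨hL0, hG⟩) (Real.sqrt_nonneg _)
end
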